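/- There do not exist a non-constant rational function F on ℂ such that F(z²) = F((z+1)²) as rational functions of z. More precisely, if F ∈ ℂ(X) satisfies F ∘ (X²) = F ∘ ((X+1)²) in ℂ(X), then F is constant. -/

import Mathlib

open Polynomial

private lemma aux_comp_ne_zero (q s : ℂ[X]) (hq : q ≠ 0) (hs : s.natDegree ≠ 0) :
    q.comp s ≠ 0 := by
  intro hz
  have hs0 : s ≠ 0 := fun h0 => hs (by simp [h0])
  have hlc := Polynomial.leadingCoeff_comp (p := q) (q := s) hs
  rw [hz, Polynomial.leadingCoeff_zero] at hlc
  exact (mul_ne_zero (Polynomial.leadingCoeff_ne_zero.mpr hq)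
    (pow_ne_zero _ (Polynomial.leadingCoeff_ne_zero.mpr hs0))) hlc.symm

private lemma aux_periodic (A : ℂ[X]) (h : A.comp (X + 1) = A) : A.natDegree = 0 := by
  have heval : ∀ n : ℕ, A.eval (n : ℂ) = A.eval 0 := by
    intro n
    induction n with
    | zero => simp
    | succ n ih =>
      have := congrArg (Polynomial.eval (n : ℂ)) h
      rw [Polynomial.eval_comp] at this
      simp only [Polynomial.eval_add, Polynomial.eval_X, Polynomial.eval_one] at this
      push_cast
      rw [this]
      exact ih
  have : A - C (A.eval 0) = 0 := by
    apply Polynomial.eq_zero_of_infinite_isRoot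
    apply Set.Infinite.mono (s := Set.range ((↑) : ℕ → ℂ))
    · rintro x ⟨n, rfl⟩
      simp [Polynomial.IsRoot, heval n]
    · exact Set.infinite_range_of_injective Nat.cast_injective
  have : A = C (A.eval 0) := by linear_combination (norm := ring_nf) this
  rw [this]; exact Polynomial.natDegree_C _

private lemma aux_shift (A B : ℂ[X]) (hA : A ≠ 0) (hcop : IsCoprime A B)
    (h : A * B.comp (X + 1) = A.comp (X + 1) * B) : A.comp (X + 1) = A := by
  have hdvd : A ∣ A.comp (X + 1) := by
    apply hcop.dvd_of_dvd_mul_right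
    exact ⟨B.comp (X + 1), h.symm⟩
  obtain ⟨k, hk⟩ := hdvd
  have hd1 : (X + 1 : ℂ[X]).natDegree = 1 := by
    compute_degree!
  have hdeg : (A.comp (X + 1)).natDegree = A.natDegree := by
    rw [Polynomial.natDegree_comp, hd1, mul_one]
  have hk0 : k ≠ 0 := by
    rintro rfl
    rw [mul_zero] at hk
    exact aux_comp_ne_zero A (X + 1) hA (by omega) hk
  have hkdeg : k.natDegree = 0 := by
    have := hdeg
    rw [hk, Polynomial.natDegree_mul hA hk0] at this
    omega
  have hlc : (A.comp (X + 1)).leadingCoeff = A.leadingCoeff := by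
    rw [Polynomial.leadingCoeff_comp (by omega)]
    have hm : (X + 1 : ℂ[X]).leadingCoeff = 1 := by
      simpa using (Polynomial.monic_X_add_C (1 : ℂ)).leadingCoeff
    rw [hm, one_pow, mul_one]
  have hklc : k.leadingCoeff = 1 := by
    have h2 := hlc
    rw [hk, Polynomial.leadingCoeff_mul] at h2
    have hA0 : A.leadingCoeff ≠ 0 := Polynomial.leadingCoeff_ne_zero.mpr hA
    exact mul_left_cancel₀ hA0 (by rw [mul_one]; exact h2)
  have : k = 1 := by
    have := Polynomial.eq_C_of_natDegree_eq_zero hkdeg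
    rw [this] at hklc ⊢
    rw [Polynomial.leadingCoeff_C] at hklc
    rw [hklc]; simp
  rw [hk, this, mul_one]

theorem stmt_1 (F : RatFunc ℂ)
    (h : RatFunc.eval (algebraMap ℂ (RatFunc ℂ)) (RatFunc.X ^ 2) F =
         RatFunc.eval (algebraMap ℂ (RatFunc ℂ)) ((RatFunc.X + 1) ^ 2) F) :
    ∃ c : ℂ, F = RatFunc.C c := by
  set φ := algebraMap ℂ[X] (RatFunc ℂ) with hφ
  have hφinj : Function.Injective φ := IsFractionRing.injective _ _
  set p := F.num with hp
  set q := F.denom with hq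
  have hq0 : q ≠ 0 := F.denom_ne_zero
  -- rewrite eval₂ as algebraMap of composition
  have key : ∀ (r : ℂ[X]) (s : ℂ[X]),
      Polynomial.eval₂ (algebraMap ℂ (RatFunc ℂ)) (φ s) r = φ (r.comp s) := by
    intro r s
    rw [← Polynomial.aeval_def, Polynomial.aeval_algebraMap_apply, Polynomial.comp_eq_aeval]
  have hXs : (RatFunc.X : RatFunc ℂ) ^ 2 = φ (X ^ 2) := by
    rw [map_pow, RatFunc.algebraMap_X]
  have hXt : ((RatFunc.X : RatFunc ℂ) + 1) ^ 2 = φ ((X + 1) ^ 2) := by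
    rw [map_pow, map_add, map_one, RatFunc.algebraMap_X]
  rw [RatFunc.eval, RatFunc.eval, hXs, hXt, key, key, key, key] at h
  have hqs : q.comp (X ^ 2) ≠ 0 := aux_comp_ne_zero q (X ^ 2) hq0 (by
    simp [Polynomial.natDegree_X_pow])
  have hd1 : ((X : ℂ[X]) + 1).natDegree = 1 := by compute_degree!
  have hassoc : ∀ r : ℂ[X], r.comp ((X + 1) ^ 2) = (r.comp (X ^ 2)).comp (X + 1) := by
    intro r
    rw [Polynomial.comp_assoc, Polynomial.pow_comp, Polynomial.X_comp]
  have hqt : q.comp ((X + 1) ^ 2) ≠ 0 := by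
    rw [hassoc]
    exact aux_comp_ne_zero _ (X + 1) hqs (by omega)
  have hcross : p.comp (X ^ 2) * q.comp ((X + 1) ^ 2)
      = p.comp ((X + 1) ^ 2) * q.comp (X ^ 2) := by
    apply hφinj
    rw [map_mul, map_mul]
    rw [div_eq_div_iff (fun hz => hqs (hφinj (by simpa using hz)))
      (fun hz => hqt (hφinj (by simpa using hz)))] at h
    exact h
  rw [hassoc p, hassoc q] at hcross
  set A := p.comp (X ^ 2) with hA
  set B := q.comp (X ^ 2) with hB
  have hcop : IsCoprime A B := by
    obtain ⟨a, b, hab⟩ := F.isCoprime_num_denom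
    refine ⟨a.comp (X ^ 2), b.comp (X ^ 2), ?_⟩
    have h3 := congrArg (Polynomial.aeval (X ^ 2 : ℂ[X])) hab
    simp only [map_add, map_mul, map_one, ← Polynomial.comp_eq_aeval] at h3
    exact h3
  clear_value A B
  have hB0 : B ≠ 0 := hqs
  have hBdeg : B.natDegree = 0 := by
    apply aux_periodic
    apply aux_shift B A hB0 hcop.symm
    linear_combination -hcross
  by_cases hp0 : p = 0
  · refine ⟨0, ?_⟩
    rw [show F = 0 from RatFunc.num_eq_zero_iff.mp hp0]
    simp
  have hA0 : A ≠ 0 := by rw [hA]; exact aux_comp_ne_zero p (X ^ 2) hp0 (by simp [Polynomial.natDegree_X_pow])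
  have hAdeg : A.natDegree = 0 := by
    apply aux_periodic
    apply aux_shift A B hA0 hcop
    linear_combination hcross
  have hpdeg : p.natDegree = 0 := by
    have := hAdeg
    rw [hA, Polynomial.natDegree_comp] at this
    simp [Polynomial.natDegree_X_pow] at this
    omega
  have hqdeg : q.natDegree = 0 := by
    have := hBdeg
    rw [hB, Polynomial.natDegree_comp] at this
    simp [Polynomial.natDegree_X_pow] at this
    omega
  have hq1 : q = 1 := Polynomial.eq_one_of_monic_natDegree_zero F.monic_denom hqdeg
  refine ⟨p.coeff 0, ?_⟩
  have hpC : p = Polynomial.C (p.coeff 0) := Polynomial.eq_C_of_natDegree_eq_zero hpdeg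
  rw [← F.num_div_denom, ← hp, ← hq, hq1, map_one, div_one]
  conv_lhs => rw [hpC]
  exact RatFunc.algebraMap_C _
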